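/- arXiv:2603.20589 — 2 statements merged into one kernel-verified Lean document; each statement's English description precedes it below -/
import Mathlib

section
/- Let M ≤ N be positive integers, let A ∈ 𝔽₂^{M×N} admit a peeling order given by pairwise distinct row indices a_1, …, a_M and pairwise distinct column indices i_1, …, i_M, and let b ∈ 𝔽₂^M. Consider the random assignment X ∈ 𝔽₂^N produced as follows: first, the coordinates X_l for l ∉ {i_1, …, i_M} are chosen independently and uniformly at random in 𝔽₂; then, for j = M, M−1, …, 1 in decreasing order, one sets X_{i_j} := b_{a_j} − Σ_{l ≠ i_j} A_{a_j, l} X_l (all previously needed coordinates are already assigned at that point, since A_{a_j, i_{j'}} = 0 for every j' < j). Then X is uniformly distributed on the solution set S(A,b) = {x ∈ 𝔽₂^N : A x = b}; in particular S(A,b) is nonempty for every b. -/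
/-!
STATEMENT 0: Peeling-order sampler for XORSAT.

`𝔽₂` is `ZMod 2`.  Given `A ∈ 𝔽₂^{M×N}` with a peeling order (pairwise distinct
rows `a 0, …, a (M-1)` and columns `i 0, …, i (M-1)` with `A (a j) (i j) = 1` and
`A (a j') (i j) = 0` for `j < j'`), and `b ∈ 𝔽₂^M`, the sampler first draws the
coordinates outside `{i 0, …, i (M-1)}` i.i.d. uniform, then for `j = M-1, M-2, …, 0`
(i.e. decreasing) sets `X (i j) := b (a j) - ∑_{l ≠ i j} A (a j) l * X l`.
The result is uniform on the solution set `{x : A.mulVec x = b}`, which is in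
particular nonempty.
-/

open Matrix

namespace Stmt0

variable {M N : ℕ}

/-- One peeling step: assign coordinate `i j` using row `a j`. -/
def peelStep (A : Matrix (Fin M) (Fin N) (ZMod 2)) (b : Fin M → ZMod 2)
    (a : Fin M → Fin M) (i : Fin M → Fin N) (j : Fin M)
    (x : Fin N → ZMod 2) : Fin N → ZMod 2 :=
  Function.update x (i j)
    (b (a j) - ∑ l ∈ Finset.univ.erase (i j), A (a j) l * x l)

/-- Run the peeling pass for `j = M-1, M-2, …, 0` (decreasing order of `j`):
`foldr` applies the step at `j = M-1` first (innermost) and `j = 0` last. -/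
def peelAll (A : Matrix (Fin M) (Fin N) (ZMod 2)) (b : Fin M → ZMod 2)
    (a : Fin M → Fin M) (i : Fin M → Fin N) (x : Fin N → ZMod 2) :
    Fin N → ZMod 2 :=
  (List.finRange M).foldr (peelStep A b a i) x

/-- The sampler: extend a choice `v` of the free coordinates (those outside the
range of `i`) by `0` on the range of `i`, then run the peeling pass. -/
def sampler (A : Matrix (Fin M) (Fin N) (ZMod 2)) (b : Fin M → ZMod 2)
    (a : Fin M → Fin M) (i : Fin M → Fin N)
    (v : {l : Fin N // l ∉ Finset.image i Finset.univ} → ZMod 2) :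
    Fin N → ZMod 2 :=
  peelAll A b a i (fun l => if h : l ∈ Finset.image i Finset.univ then 0 else v ⟨l, h⟩)

section Aux

variable (A : Matrix (Fin M) (Fin N) (ZMod 2)) (b : Fin M → ZMod 2)
  (a : Fin M → Fin M) (i : Fin M → Fin N)

lemma free_preserved (L : List (Fin M)) (x : Fin N → ZMod 2) (l : Fin N)
    (hl : l ∉ Finset.image i Finset.univ) :
    L.foldr (peelStep A b a i) x l = x l := by
  induction L with
  | nil => rfl
  | cons j L IH =>
    simp only [List.foldr_cons, peelStep]
    rw [Function.update_of_ne, IH]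
    intro h
    exact hl (h ▸ Finset.mem_image_of_mem i (Finset.mem_univ j))

lemma rows_sat (hone : ∀ j : Fin M, A (a j) (i j) = 1)
    (hzero : ∀ j j' : Fin M, j < j' → A (a j') (i j) = 0) :
    ∀ L : List (Fin M), L.Pairwise (· < ·) →
      ∀ j ∈ L, ∀ x : Fin N → ZMod 2,
        ∑ l, A (a j) l * (L.foldr (peelStep A b a i) x) l = b (a j) := by
  intro L
  induction L with
  | nil => intro _ j hj; exact absurd hj (List.not_mem_nil (a := j))
  | cons j' L IH =>
    intro hp j hj x
    have hpL := List.pairwise_cons.mp hp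
    set y := L.foldr (peelStep A b a i) x with hy
    rcases List.mem_cons.mp hj with rfl | hjL
    · simp only [List.foldr_cons, peelStep, ← hy]
      rw [← Finset.add_sum_erase _ _ (Finset.mem_univ (i j))]
      rw [Function.update_self, hone]
      have hcong : ∑ l ∈ Finset.univ.erase (i j),
          A (a j) l * Function.update y (i j)
            (b (a j) - ∑ l ∈ Finset.univ.erase (i j), A (a j) l * y l) l
          = ∑ l ∈ Finset.univ.erase (i j), A (a j) l * y l := by
        refine Finset.sum_congr rfl fun l hl => ?_
        rw [Function.update_of_ne (Finset.ne_of_mem_erase hl)]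
      rw [hcong]
      ring
    · have hj'j : j' < j := hpL.1 j hjL
      have hz : A (a j) (i j') = 0 := hzero j' j hj'j
      have IHval := IH hpL.2 j hjL x
      simp only [List.foldr_cons, peelStep, ← hy]
      rw [← Finset.add_sum_erase _ _ (Finset.mem_univ (i j'))]
      rw [← Finset.add_sum_erase _ _ (Finset.mem_univ (i j'))] at IHval
      rw [hz, zero_mul] at IHval ⊢
      rw [zero_add] at IHval ⊢
      rw [← IHval]
      refine Finset.sum_congr rfl fun l hl => ?_
      rw [Function.update_of_ne (Finset.ne_of_mem_erase hl)]

lemma recompute (hi : Function.Injective i)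
    (hone : ∀ j : Fin M, A (a j) (i j) = 1)
    (hzero : ∀ j j' : Fin M, j < j' → A (a j') (i j) = 0)
    (x : Fin N → ZMod 2) (hx : A.mulVec x = b) :
    ∀ L : List (Fin M), L.Pairwise (· < ·) →
      (∀ j j' : Fin M, j ∈ L → j < j' → j' ∈ L) →
      ∀ x₀ : Fin N → ZMod 2, (∀ l, l ∉ Finset.image i Finset.univ → x₀ l = x l) →
      (∀ l, l ∉ Finset.image i Finset.univ →
          (L.foldr (peelStep A b a i) x₀) l = x l) ∧
      (∀ j ∈ L, (L.foldr (peelStep A b a i) x₀) (i j) = x (i j)) := by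
  intro L
  induction L with
  | nil =>
    intro _ _ x₀ hx₀
    exact ⟨fun l hl => hx₀ l hl, fun j hj => absurd hj (List.not_mem_nil (a := j))⟩
  | cons k L IH =>
    intro hp hcl x₀ hx₀
    have hpL := List.pairwise_cons.mp hp
    have hclL : ∀ j j' : Fin M, j ∈ L → j < j' → j' ∈ L := by
      intro j j' hj hlt
      have hkj : k < j := hpL.1 j hj
      have := hcl j j' (List.mem_cons_of_mem k hj) hlt
      rcases List.mem_cons.mp this with rfl | h
      · exact absurd (hkj.trans hlt) (lt_irrefl _)
      · exact h
    obtain ⟨IH1, IH2⟩ := IH hpL.2 hclL x₀ hx₀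
    set z := L.foldr (peelStep A b a i) x₀ with hz
    constructor
    · intro l hl
      exact (free_preserved A b a i _ x₀ l hl).trans (hx₀ l hl)
    · intro j hj
      rcases List.mem_cons.mp hj with rfl | hjL
      · -- j = k : the freshly assigned coordinate
        simp only [List.foldr_cons, peelStep, ← hz]
        rw [Function.update_self]
        have hsum : ∑ l ∈ Finset.univ.erase (i j), A (a j) l * z l
            = ∑ l ∈ Finset.univ.erase (i j), A (a j) l * x l := by
          refine Finset.sum_congr rfl fun l hl => ?_
          by_cases hA : A (a j) l = 0
          · rw [hA, zero_mul, zero_mul]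
          · congr 1
            by_cases hmem : l ∈ Finset.image i Finset.univ
            · obtain ⟨j'', _, rfl⟩ := Finset.mem_image.mp hmem
              by_cases hj''L : j'' ∈ L
              · exact IH2 j'' hj''L
              · exfalso
                have hne : j'' ≠ j := fun h =>
                  Finset.ne_of_mem_erase hl (by rw [h])
                have hnotmem : j'' ∉ j :: L := by
                  intro h
                  rcases List.mem_cons.mp h with h | h
                  · exact hne h
                  · exact hj''L h
                have hle : ¬ j < j'' := fun h =>
                  hnotmem (hcl j j'' (List.mem_cons_self (a := j) (l := L)) h)
                have : j'' < j := lt_of_le_of_ne (not_lt.mp hle) hne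
                exact hA (hzero j'' j this)
            · exact IH1 l hmem
        rw [hsum]
        have hb : b (a j) = A (a j) (i j) * x (i j)
            + ∑ l ∈ Finset.univ.erase (i j), A (a j) l * x l := by
          rw [Finset.add_sum_erase _ (fun l => A (a j) l * x l) (Finset.mem_univ (i j))]
          rw [← hx]
          simp [Matrix.mulVec, dotProduct]
        rw [hb, hone, one_mul, add_sub_cancel_right]
      · -- j ∈ L : coordinate already assigned, untouched by step k
        have hne : i j ≠ i k := fun h =>
          absurd (hi h ▸ hpL.1 j hjL) (lt_irrefl _)
        simp only [List.foldr_cons, peelStep, ← hz]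
        rw [Function.update_of_ne hne]
        exact IH2 j hjL

end Aux

theorem stmt0 (hM : 0 < M) (hMN : M ≤ N)
    (A : Matrix (Fin M) (Fin N) (ZMod 2)) (b : Fin M → ZMod 2)
    (a : Fin M → Fin M) (i : Fin M → Fin N)
    (ha : Function.Injective a) (hi : Function.Injective i)
    (hone : ∀ j : Fin M, A (a j) (i j) = 1)
    (hzero : ∀ j j' : Fin M, j < j' → A (a j') (i j) = 0) :
    ∃ hne : (Finset.univ.filter fun x : Fin N → ZMod 2 => A.mulVec x = b).Nonempty,
      PMF.map (sampler A b a i)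
          (PMF.uniformOfFintype ({l : Fin N // l ∉ Finset.image i Finset.univ} → ZMod 2))
        = PMF.uniformOfFinset
            (Finset.univ.filter fun x : Fin N → ZMod 2 => A.mulVec x = b) hne := by
  classical
  set s := Finset.univ.filter fun x : Fin N → ZMod 2 => A.mulVec x = b with hs
  set f := sampler A b a i with hf
  have hasurj : Function.Surjective a := Finite.surjective_of_injective ha
  have hpw : (List.finRange M).Pairwise (· < ·) := List.pairwise_lt_finRange M
  -- every sampler output is a solution
  have hmem : ∀ v, f v ∈ s := by
    intro v
    rw [hs, Finset.mem_filter]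
    refine ⟨Finset.mem_univ _, ?_⟩
    funext r
    obtain ⟨j, rfl⟩ := hasurj r
    have := rows_sat A b a i hone hzero (List.finRange M) hpw j
      (List.mem_finRange j)
      (fun l => if h : l ∈ Finset.image i Finset.univ then 0 else v ⟨l, h⟩)
    simpa [Matrix.mulVec, dotProduct, hf, sampler, peelAll] using this
  -- the free coordinates are recoverable, hence injectivity
  have hfree : ∀ v (l : Fin N) (h : l ∉ Finset.image i Finset.univ),
      f v l = v ⟨l, h⟩ := by
    intro v l h
    have := free_preserved A b a i (List.finRange M)
      (fun l => if h : l ∈ Finset.image i Finset.univ then 0 else v ⟨l, h⟩) l h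
    simp only [hf, sampler, peelAll, this, dif_neg h]
  have hinj : Function.Injective f := by
    intro v w hvw
    funext c
    have := hfree v c.1 c.2
    rw [hvw, hfree w c.1 c.2] at this
    exact this.symm
  -- surjectivity onto the solution set
  have hsurj : ∀ x ∈ s, ∃ v, f v = x := by
    intro x hxs
    rw [hs, Finset.mem_filter] at hxs
    refine ⟨fun c => x c.1, ?_⟩
    have key := recompute A b a i hi hone hzero x hxs.2 (List.finRange M) hpw
      (fun j j' _ _ => List.mem_finRange j')
      (fun l => if h : l ∈ Finset.image i Finset.univ then 0 else x l)
      (fun l hl => dif_neg hl)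
    funext l
    by_cases hl : l ∈ Finset.image i Finset.univ
    · obtain ⟨j, _, rfl⟩ := Finset.mem_image.mp hl
      exact key.2 j (List.mem_finRange j)
    · exact key.1 l hl
  -- the image characterisation and cardinality
  have himg : s = Finset.image f Finset.univ := by
    ext x
    simp only [Finset.mem_image]
    constructor
    · intro hx
      obtain ⟨v, hv⟩ := hsurj x hx
      exact ⟨v, Finset.mem_univ v, hv⟩
    · rintro ⟨v, _, rfl⟩
      exact hmem v
  have hcard : s.card = Fintype.card
      ({l : Fin N // l ∉ Finset.image i Finset.univ} → ZMod 2) := by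
    rw [himg, Finset.card_image_of_injective _ hinj, Finset.card_univ]
  have hne : s.Nonempty := ⟨f (fun _ => 0), hmem _⟩
  refine ⟨hne, ?_⟩
  ext y
  rw [PMF.map_apply, PMF.uniformOfFinset_apply]
  rw [tsum_fintype]
  by_cases hy : y ∈ s
  · obtain ⟨v₀, hv₀⟩ := hsurj y hy
    rw [if_pos hy]
    rw [Finset.sum_eq_single v₀]
    · rw [if_pos hv₀.symm, PMF.uniformOfFintype_apply, hcard]
    · intro v _ hv
      rw [if_neg]
      intro h
      exact hv (hinj (hv₀.trans h)).symm
    · intro h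
      exact absurd (Finset.mem_univ v₀) h
  · rw [if_neg hy]
    refine Finset.sum_eq_zero fun v _ => ?_
    rw [if_neg]
    intro h
    exact hy (h ▸ hmem v)

end Stmt0
end

section
/- Let A ∈ 𝔽₂^{M×N} with M ≥ 1, N ≥ 1, and b ∈ 𝔽₂^M. Suppose the i-th column of A has exactly one nonzero entry, located in row a (i.e., variable i appears in exactly one constraint, namely constraint a). Let A' ∈ 𝔽₂^{(M−1)×(N−1)} be obtained from A by deleting row a and column i, and let b' ∈ 𝔽₂^{M−1} be obtained from b by deleting entry a. Then the map that deletes coordinate i is a bijection from the solution set S(A,b) onto the solution set S(A',b'); in particular |S(A,b)| = |S(A',b')|, and every solution of the reduced system extends to a solution of the full system by a unique choice of the i-th coordinate. -/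
/-!
STATEMENT 7: One step of leaf removal for XORSAT over `𝔽₂ = ZMod 2`.

`A ∈ 𝔽₂^{(m+1)×(n+1)}` (so `M = m+1 ≥ 1`, `N = n+1 ≥ 1`), `b ∈ 𝔽₂^{m+1}`.
Suppose column `i` has exactly one nonzero entry, in row `a`.  Deleting row `a`
and column `i` gives `A'`, `b'`.  Then the coordinate-deletion map is a
bijection from `S(A,b)` onto `S(A',b')`; in particular the two solution sets
have the same cardinality, and every solution of the reduced system extends to
a solution of the full system by a unique choice of the `i`-th coordinate
(i.e. the extension is unique).
-/

open Matrix

theorem stmt7 {m n : ℕ}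
    (A : Matrix (Fin (m + 1)) (Fin (n + 1)) (ZMod 2)) (b : Fin (m + 1) → ZMod 2)
    (a : Fin (m + 1)) (i : Fin (n + 1))
    (hone : A a i = 1) (hcol : ∀ r : Fin (m + 1), r ≠ a → A r i = 0) :
    Set.BijOn (fun (x : Fin (n + 1) → ZMod 2) (c : Fin n) => x (i.succAbove c))
        {x | A.mulVec x = b}
        {y | (Matrix.of fun (r : Fin m) (c : Fin n) =>
                A (a.succAbove r) (i.succAbove c)).mulVec y
              = fun r : Fin m => b (a.succAbove r)} ∧
    (Finset.univ.filter fun x : Fin (n + 1) → ZMod 2 => A.mulVec x = b).card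
      = (Finset.univ.filter fun y : Fin n → ZMod 2 =>
          (Matrix.of fun (r : Fin m) (c : Fin n) =>
              A (a.succAbove r) (i.succAbove c)).mulVec y
            = fun r : Fin m => b (a.succAbove r)).card ∧
    (∀ y : Fin n → ZMod 2,
      (Matrix.of fun (r : Fin m) (c : Fin n) =>
          A (a.succAbove r) (i.succAbove c)).mulVec y
        = (fun r : Fin m => b (a.succAbove r)) →
      ∃! x : Fin (n + 1) → ZMod 2,
        A.mulVec x = b ∧ (fun c : Fin n => x (i.succAbove c)) = y) := by
  have self2 : ∀ z : ZMod 2, z + z = 0 := by decide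
  set A' : Matrix (Fin m) (Fin n) (ZMod 2) :=
    Matrix.of fun (r : Fin m) (c : Fin n) => A (a.succAbove r) (i.succAbove c) with hA'
  set b' : Fin m → ZMod 2 := fun r => b (a.succAbove r) with hb'
  have key : ∀ x : Fin (n+1) → ZMod 2,
      A.mulVec x = b ↔
        (A'.mulVec (fun c => x (i.succAbove c)) = b' ∧
         x i = b a + ∑ c, A a (i.succAbove c) * x (i.succAbove c)) := by
    intro x
    constructor
    · intro hx
      constructor
      · funext r
        have h := congrFun hx (a.succAbove r)
        simp only [mulVec, dotProduct] at h
        rw [Fin.sum_univ_succAbove _ i, hcol _ (a.succAbove_ne r), zero_mul, zero_add] at h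
        simpa [mulVec, dotProduct, hA', hb'] using h
      · have h := congrFun hx a
        simp only [mulVec, dotProduct] at h
        rw [Fin.sum_univ_succAbove _ i, hone, one_mul] at h
        have h2 := congrArg (· + ∑ c, A a (i.succAbove c) * x (i.succAbove c)) h
        simpa [add_assoc, self2] using h2
    · rintro ⟨h1, h2⟩
      funext r
      rcases eq_or_ne r a with rfl | hr
      · simp only [mulVec, dotProduct]
        rw [Fin.sum_univ_succAbove _ i, hone, one_mul, h2, add_assoc, self2, add_zero]
      · obtain ⟨r', rfl⟩ := Fin.exists_succAbove_eq hr
        have h := congrFun h1 r'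
        simp only [mulVec, dotProduct, hA', Matrix.of_apply, hb'] at h
        simp only [mulVec, dotProduct]
        rw [Fin.sum_univ_succAbove _ i, hcol _ (a.succAbove_ne r'), zero_mul, zero_add]
        exact h
  set ext : (Fin n → ZMod 2) → (Fin (n+1) → ZMod 2) :=
    fun y => i.insertNth (b a + ∑ c, A a (i.succAbove c) * y c) y with hext
  have hrestr : ∀ y, (fun c => ext y (i.succAbove c)) = y := by
    intro y; funext c; simp [hext]
  have hext_sol : ∀ y, A'.mulVec y = b' → A.mulVec (ext y) = b := by
    intro y hy
    refine (key _).2 ⟨by rw [hrestr]; exact hy, ?_⟩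
    simp [hext]
  have hrecon : ∀ x : Fin (n+1) → ZMod 2,
      i.insertNth (x i) (fun c => x (i.succAbove c)) = x := by
    intro x; funext j
    refine Fin.succAboveCases i ?_ ?_ j <;> simp
  have hinj : ∀ x₁ ∈ {x | A.mulVec x = b}, ∀ x₂ ∈ {x | A.mulVec x = b},
      (fun c => x₁ (i.succAbove c)) = (fun c => x₂ (i.succAbove c)) → x₁ = x₂ := by
    intro x₁ h1 x₂ h2 hres
    have k1 := (key x₁).1 h1
    have k2 := (key x₂).1 h2
    have hi : x₁ i = x₂ i := by
      rw [k1.2, k2.2]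
      exact congrArg _ (by rw [funext_iff] at hres; simp [hres])
    rw [← hrecon x₁, ← hrecon x₂, hi, hres]
  refine ⟨⟨fun x hx => ((key x).1 hx).1, hinj, ?_⟩, ?_, ?_⟩
  · intro y hy
    exact ⟨ext y, hext_sol y hy, hrestr y⟩
  · refine Finset.card_bij' (fun x _ => fun c => x (i.succAbove c)) (fun y _ => ext y)
      ?_ ?_ ?_ ?_
    · intro x hx
      simp only [Finset.mem_filter, Finset.mem_univ, true_and] at hx ⊢
      exact ((key x).1 hx).1
    · intro y hy
      simp only [Finset.mem_filter, Finset.mem_univ, true_and] at hy ⊢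
      exact hext_sol y hy
    · intro x hx
      simp only [Finset.mem_filter, Finset.mem_univ, true_and] at hx
      exact hinj _ (hext_sol _ ((key x).1 hx).1) _ hx (hrestr _)
    · intro y hy
      exact hrestr y
  · intro y hy
    refine ⟨ext y, ⟨hext_sol y hy, hrestr y⟩, ?_⟩
    rintro x ⟨hx, hxy⟩
    exact hinj _ hx _ (hext_sol y hy) (by rw [hxy, hrestr])
end
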